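/- arXiv:1912.13216 — 4 statements merged into one kernel-verified Lean document; each statement's English description precedes it below -/
import Mathlib

section
/- Let $I \subseteq (0,\infty)$ be a bounded interval and $n \ge 3$. Then there is a constant $C$ depending only on $n$ (independent of $I$ and $V$) such that for any $V \in H^1(I)$, $\sup_{s \in I} s^{n/2-1}|V(s)| \le C \left( \left(\int_I s^{n-1}|V'(s)|^2\,ds\right)^{1/2} + |I|^{-1} \left(\int_I s^{n-1}|V(s)|^2\,ds\right)^{1/2} \right)$. -/
open MeasureTheory Set Real

/-!
Let `F(x) = x^(n-2) V(x)^2`, so `F' = (n-2) x^(n-3) V^2 + 2 x^(n-2) V V'`. Since `n - 2 ≥ 1`,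
completing the square gives `-F' ≤ x^(n-1) V'^2`, hence `F(s) ≤ F(t) + ∫ x^(n-1) V'^2` for `s ≤ t`.
Where `x ≥ |I|/2` one also has `F' ≤ x^(n-1) V'^2 + 4(n-1) |I|⁻² x^(n-1) V^2`, which handles `t ≤ s`
for `t` in the upper half of `I`. Picking such a `t` at which `x^(n-1) V^2` is at most its mean
over the upper half gives `F(t) ≤ 4 |I|⁻² ∫ x^(n-1) V^2`, so
`F(s) ≤ ∫ x^(n-1) V'^2 + 4n |I|⁻² ∫ x^(n-1) V^2`, and the claim holds with `C = 2√n`.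
The lemmas write `n = k + 3`.
-/

theorem sub_le_setIntegral_of_hasDerivAt_of_le {f f' φ : ℝ → ℝ} {a b u v : ℝ}
    (hau : a ≤ u) (huv : u ≤ v) (hvb : v ≤ b) (hf : ∀ x ∈ Icc u v, HasDerivAt f (f' x) x)
    (hφ : IntegrableOn φ (Ioo a b)) (hφ_nonneg : ∀ x ∈ Ioo a b, 0 ≤ φ x)
    (hf'φ : ∀ x ∈ Ioo u v, f' x ≤ φ x) :
    f v - f u ≤ ∫ x in Ioo a b, φ x :=
  calc f v - f u ≤ ∫ x in u..v, φ x :=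
        intervalIntegral.sub_le_integral_of_hasDeriv_right_of_le huv
          (fun x hx => (hf x hx).continuousAt.continuousWithinAt)
          (fun x hx => (hf x (Ioo_subset_Icc_self hx)).hasDerivWithinAt)
          (((integrableOn_Icc_iff_integrableOn_Ioo (f := φ) (a := a) (b := b)).2 hφ).mono_set
            (Icc_subset_Icc hau hvb)) hf'φ
    _ = ∫ x in Ioo u v, φ x := by
        rw [intervalIntegral.integral_of_le huv, integral_Ioc_eq_integral_Ioo]
    _ ≤ ∫ x in Ioo a b, φ x :=
        setIntegral_mono_set hφ (ae_restrict_of_forall_mem measurableSet_Ioo hφ_nonneg)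
          (Ioo_subset_Ioo hau hvb).eventuallyLE

theorem exists_mem_Ioo_mul_le_setIntegral {f : ℝ → ℝ} {u v : ℝ} (huv : u < v)
    (hf : IntegrableOn f (Ioo u v)) : ∃ t ∈ Ioo u v, (v - u) * f t ≤ ∫ x in Ioo u v, f x := by
  obtain ⟨t, ht, hle⟩ := exists_le_setAverage (by simp [huv]) (by simp) hf
  refine ⟨t, ht, ?_⟩
  rwa [setAverage_eq, measureReal_def, Real.volume_Ioo, ENNReal.toReal_ofReal (sub_nonneg.2 huv.le),
    smul_eq_mul, ← div_eq_inv_mul, le_div_iff₀' (sub_pos.2 huv)] at hle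

theorem HasDerivAt.pow_succ_mul_sq {V : ℝ → ℝ} {v' x : ℝ} (k : ℕ) (hV : HasDerivAt V v' x) :
    HasDerivAt (fun y => y ^ (k + 1) * V y ^ 2)
      ((k + 1) * x ^ k * V x ^ 2 + 2 * x ^ (k + 1) * (V x * v')) x :=
  ((hasDerivAt_pow (k + 1) x).mul (hV.pow 2)).congr_deriv (by
    simp only [Pi.pow_apply, Nat.cast_add, Nat.cast_one, Nat.cast_ofNat, add_tsub_cancel_right]
    ring)

section Pointwise

variable (k : ℕ) {x : ℝ} (v w : ℝ)

theorem neg_pow_mul_sq_add_le (hx : 0 ≤ x) :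
    -((k + 1) * x ^ k * v ^ 2 + 2 * x ^ (k + 1) * (v * w)) ≤ x ^ (k + 2) * w ^ 2 := by
  have hsq : 0 ≤ x ^ k * (k * v ^ 2 + (v + x * w) ^ 2) := by positivity
  linarith [show x ^ k * (k * v ^ 2 + (v + x * w) ^ 2)
    = x ^ (k + 2) * w ^ 2 + ((k + 1) * x ^ k * v ^ 2 + 2 * x ^ (k + 1) * (v * w)) by ring]

theorem pow_mul_sq_add_le {r : ℝ} (hr : 0 < r) (hrx : r ≤ x) :
    (k + 1) * x ^ k * v ^ 2 + 2 * x ^ (k + 1) * (v * w)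
      ≤ x ^ (k + 2) * w ^ 2 + (k + 2) / r ^ 2 * (x ^ (k + 2) * v ^ 2) := by
  have hx : 0 < x := hr.trans_le hrx
  have hsq : 0 ≤ x ^ k * (x * w - v) ^ 2 := by positivity
  have hweight : (k + 2) * (x ^ k * v ^ 2) ≤ (k + 2) / r ^ 2 * (x ^ (k + 2) * v ^ 2) := by
    rw [div_mul_eq_mul_div, le_div_iff₀ (by positivity), pow_add]
    have hrx2 : r ^ 2 ≤ x ^ 2 := pow_le_pow_left₀ hr.le hrx 2
    have hlhs : 0 ≤ (k + 2) * (x ^ k * v ^ 2) := by positivity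
    nlinarith
  linarith [show x ^ k * (x * w - v) ^ 2 = x ^ (k + 2) * w ^ 2 + (k + 2) * (x ^ k * v ^ 2)
    - (k + 1) * x ^ k * v ^ 2 - 2 * x ^ (k + 1) * (v * w) by ring]

end Pointwise

theorem setIntegral_pow_mul_sq_nonneg {a b : ℝ} (ha : 0 ≤ a) (k : ℕ) (W : ℝ → ℝ) :
    0 ≤ ∫ x in Ioo a b, x ^ k * W x ^ 2 :=
  setIntegral_nonneg measurableSet_Ioo fun x hx => by
    have := ha.trans hx.1.le
    positivity

section Weighted

variable {k : ℕ} {a b : ℝ} {V V' : ℝ → ℝ}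

theorem exists_mem_Ioo_pow_succ_mul_sq_le (ha : 0 ≤ a) (hab : a < b)
    (hV2 : IntegrableOn (fun x => x ^ (k + 2) * V x ^ 2) (Ioo a b)) :
    ∃ t ∈ Ioo ((a + b) / 2) b,
      t ^ (k + 1) * V t ^ 2 ≤ 4 / (b - a) ^ 2 * ∫ x in Ioo a b, x ^ (k + 2) * V x ^ 2 := by
  set m := (a + b) / 2 with hm
  obtain ⟨t, ⟨hmt, htb⟩, ht⟩ := exists_mem_Ioo_mul_le_setIntegral (show m < b by linarith)
    (hV2.mono_set (Ioo_subset_Ioo_left (show a ≤ m by linarith)))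
  refine ⟨t, ⟨hmt, htb⟩, ?_⟩
  have hupper : (∫ x in Ioo m b, x ^ (k + 2) * V x ^ 2) ≤ ∫ x in Ioo a b, x ^ (k + 2) * V x ^ 2 :=
    setIntegral_mono_set hV2 (ae_restrict_of_forall_mem measurableSet_Ioo fun x hx => by
      have := ha.trans_lt hx.1
      positivity) (Ioo_subset_Ioo_left (by linarith)).eventuallyLE
  have hweight : (b - a) / 2 * ((b - a) / 2 * (t ^ (k + 1) * V t ^ 2))
      ≤ (b - m) * (t ^ (k + 2) * V t ^ 2) := by
    have : 0 < t := by linarith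
    rw [show b - m = (b - a) / 2 by linarith,
      show t ^ (k + 2) * V t ^ 2 = t * (t ^ (k + 1) * V t ^ 2) by ring]
    gcongr
    linarith
  rw [div_mul_eq_mul_div, le_div_iff₀ (by nlinarith)]
  linarith

theorem pow_succ_mul_sq_sub_le (ha : 0 ≤ a) (hV : ∀ x ∈ Icc a b, HasDerivAt V (V' x) x)
    (hV' : IntegrableOn (fun x => x ^ (k + 2) * V' x ^ 2) (Ioo a b))
    (hV2 : IntegrableOn (fun x => x ^ (k + 2) * V x ^ 2) (Ioo a b)) {r s t : ℝ} (hr : 0 < r)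
    (hs : s ∈ Icc a b) (ht : t ∈ Icc a b) (hrt : r ≤ t) :
    s ^ (k + 1) * V s ^ 2 - t ^ (k + 1) * V t ^ 2 ≤ (∫ x in Ioo a b, x ^ (k + 2) * V' x ^ 2)
      + (k + 2) / r ^ 2 * ∫ x in Ioo a b, x ^ (k + 2) * V x ^ 2 := by
  set φ : ℝ → ℝ := fun x => x ^ (k + 2) * V' x ^ 2 + (k + 2) / r ^ 2 * (x ^ (k + 2) * V x ^ 2)
  have hφ : IntegrableOn φ (Ioo a b) := hV'.add (hV2.const_mul _)
  have hφ_nonneg : ∀ x ∈ Ioo a b, 0 ≤ φ x := fun x hx => by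
    have := ha.trans_lt hx.1
    positivity
  rw [← integral_const_mul, ← integral_add hV' (hV2.const_mul _)]
  have hF (x) (hx : x ∈ Icc a b) := (hV x hx).pow_succ_mul_sq k
  rcases le_total s t with hst | hts
  · have := sub_le_setIntegral_of_hasDerivAt_of_le hs.1 hst ht.2
      (fun x hx => (hF x ⟨hs.1.trans hx.1, hx.2.trans ht.2⟩).neg) hφ hφ_nonneg
      fun x hx => by
        have hx0 : 0 ≤ x := ha.trans (hs.1.trans hx.1.le)
        have hF' := neg_pow_mul_sq_add_le k (V x) (V' x) hx0
        have hV2x : 0 ≤ (k + 2) / r ^ 2 * (x ^ (k + 2) * V x ^ 2) := by positivity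
        simp only [φ]
        linarith
    simp only [Pi.neg_apply] at this
    linarith
  · exact sub_le_setIntegral_of_hasDerivAt_of_le ht.1 hts hs.2
      (fun x hx => hF x ⟨ht.1.trans hx.1, hx.2.trans hs.2⟩) hφ hφ_nonneg
      fun x hx => pow_mul_sq_add_le k (V x) (V' x) hr (hrt.trans hx.1.le)

theorem pow_succ_mul_sq_le (ha : 0 ≤ a) (hab : a < b) (hV : ∀ x ∈ Icc a b, HasDerivAt V (V' x) x)
    (hV' : IntegrableOn (fun x => x ^ (k + 2) * V' x ^ 2) (Ioo a b))
    (hV2 : IntegrableOn (fun x => x ^ (k + 2) * V x ^ 2) (Ioo a b)) {s : ℝ} (hs : s ∈ Icc a b) :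
    s ^ (k + 1) * V s ^ 2 ≤ (∫ x in Ioo a b, x ^ (k + 2) * V' x ^ 2)
      + 4 * (k + 3) / (b - a) ^ 2 * ∫ x in Ioo a b, x ^ (k + 2) * V x ^ 2 := by
  obtain ⟨t, ⟨hmt, htb⟩, hFt⟩ := exists_mem_Ioo_pow_succ_mul_sq_le ha hab hV2
  have hFst := pow_succ_mul_sq_sub_le ha hV hV' hV2 (r := (b - a) / 2) (by linarith) hs
    ⟨by linarith, htb.le⟩ (by linarith)
  have hcoeff : 4 * (k + 3) / (b - a) ^ 2 = (k + 2) / ((b - a) / 2) ^ 2 + 4 / (b - a) ^ 2 := by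
    field_simp [(sub_pos.2 hab).ne']
    ring
  rw [hcoeff, add_mul]
  linarith

end Weighted

theorem rpow_div_two_sub_one_sq {s : ℝ} (hs : 0 ≤ s) {n : ℕ} (hn : 2 ≤ n) :
    (s ^ ((n : ℝ) / 2 - 1)) ^ 2 = s ^ (n - 2) := by
  rw [← rpow_natCast, ← rpow_mul hs, ← rpow_natCast, Nat.cast_sub hn]
  congr 1
  push_cast
  ring

theorem le_sqrt_mul_sqrt_add_of_sq_le {x K A B r : ℝ} (hK : 0 ≤ K) (hA : 0 ≤ A) (hB : 0 ≤ B)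
    (hr : 0 ≤ r) (h : x ^ 2 ≤ K * (A + r ^ 2 * B)) : x ≤ √K * (√A + r * √B) := by
  refine (le_abs_self x).trans (abs_le_of_sq_le_sq ?_ (by positivity))
  calc x ^ 2 ≤ K * (A + r ^ 2 * B) := h
    _ ≤ K * (A + r ^ 2 * B + 2 * r * (√A * √B)) :=
      mul_le_mul_of_nonneg_left (le_add_of_nonneg_right (by positivity)) hK
    _ = (√K * (√A + r * √B)) ^ 2 := by
      rw [mul_pow, add_sq, mul_pow, sq_sqrt hK, sq_sqrt hA, sq_sqrt hB]
      ring

/-- Lemma (Hardy-type estimate on an interval): for a bounded interval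
`I = Ioo a b ⊆ (0,∞)`, `n ≥ 3`, and `V ∈ H¹(I)` (realized by an absolutely
continuous representative with derivative `V'`),
`sup_{s∈I} s^{n/2-1}|V(s)| ≤ C ((∫ s^{n-1}|V'|²)^{1/2} + |I|⁻¹ (∫ s^{n-1}|V|²)^{1/2})`
with `C = C(n)` independent of `I` and `V`. -/
theorem stmt_0 (n : ℕ) (hn : 3 ≤ n) :
    ∃ C > (0:ℝ), ∀ (a b : ℝ), 0 < a → a < b →
      ∀ V V' : ℝ → ℝ,
        (∀ x ∈ Icc a b, HasDerivAt V (V' x) x) →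
        IntegrableOn (fun s => s ^ (n - 1 : ℕ) * (V' s) ^ 2) (Ioo a b) →
        IntegrableOn (fun s => s ^ (n - 1 : ℕ) * (V s) ^ 2) (Ioo a b) →
        ∀ s ∈ Ioo a b,
          s ^ ((n : ℝ) / 2 - 1) * |V s| ≤
            C * ((∫ x in Ioo a b, x ^ (n - 1 : ℕ) * (V' x) ^ 2) ^ (1/2 : ℝ)
              + (b - a)⁻¹ * (∫ x in Ioo a b, x ^ (n - 1 : ℕ) * (V x) ^ 2) ^ (1/2 : ℝ)) := by
  refine ⟨√(4 * n), by positivity, fun a b ha hab V V' hV hA hB s hs => ?_⟩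
  obtain ⟨k, rfl⟩ : ∃ k, n = k + 3 := ⟨n - 3, by omega⟩
  set A := ∫ x in Ioo a b, x ^ (k + 2) * V' x ^ 2
  set B := ∫ x in Ioo a b, x ^ (k + 2) * V x ^ 2
  have hA0 : 0 ≤ A := setIntegral_pow_mul_sq_nonneg ha.le _ _
  have hB0 : 0 ≤ B := setIntegral_pow_mul_sq_nonneg ha.le _ _
  rw [← sqrt_eq_rpow, ← sqrt_eq_rpow]
  refine le_sqrt_mul_sqrt_add_of_sq_le (by positivity) hA0 hB0 (by positivity) ?_
  rw [mul_pow, sq_abs, rpow_div_two_sub_one_sq (ha.trans hs.1).le (by omega)]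
  push_cast
  calc s ^ (k + 1) * V s ^ 2 ≤ A + 4 * (k + 3) / (b - a) ^ 2 * B :=
        pow_succ_mul_sq_le ha.le hab hV hA hB (Ioo_subset_Icc_self hs)
    _ ≤ 4 * (k + 3) * A + 4 * (k + 3) / (b - a) ^ 2 * B := by
      gcongr
      exact le_mul_of_one_le_left hA0 (by linarith)
    _ = 4 * (k + 3) * (A + (b - a)⁻¹ ^ 2 * B) := by rw [inv_pow]; ring
end

section
/- Let $n \ge 3$, $I \subseteq (0,\infty)$ a bounded interval, $V \in H^1(I)$, and $\alpha, \beta \in I$ with $\beta \ge \alpha/3$. Then $\alpha^{n/2-1}|V(\alpha)| \le C\left( \left(\int_I s^{n-1}|V'(s)|^2 ds\right)^{1/2} + \beta^{n/2-1}|V(\beta)| \right)$ for a constant $C$ depending only on $n$. -/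
open MeasureTheory Set

/-!
By the fundamental theorem of calculus, `|V α| ≤ |V β| + ∫ |V'|` over the interval between `α`
and `β`. Cauchy–Schwarz with the weight `s ^ (n - 1)` bounds this integral by
`(∫ s ^ (n - 1) V'²) ^ (1/2) * (∫ s ^ (1 - n)) ^ (1/2)`, and since that interval lies in
`(α / 3, ∞)`, the last integral is at most `(α / 3) ^ (2 - n) / (n - 2)`. After multiplying by
`α ^ (n/2 - 1)` both terms are controlled with `C = 3 ^ (n/2 - 1)`, the second because
`α ≤ 3 β`.
-/

theorem integral_abs_le_sqrt_mul_sqrt {α : Type*} [MeasurableSpace α] {μ : Measure α}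
    {f w : α → ℝ} (hw : ∀ᵐ x ∂μ, 0 < w x) (hf : AEStronglyMeasurable f μ)
    (hwm : AEStronglyMeasurable w μ) (hwf : Integrable (fun x => w x * f x ^ 2) μ)
    (hw_inv : Integrable (fun x => (w x)⁻¹) μ) :
    Integrable f μ ∧ ∫ x, |f x| ∂μ ≤ √(∫ x, w x * f x ^ 2 ∂μ) * √(∫ x, (w x)⁻¹ ∂μ) := by
  set F : α → ℝ := fun x => √(w x) * |f x|
  set G : α → ℝ := fun x => (√(w x))⁻¹
  have hF2 : (fun x => F x ^ 2) =ᵐ[μ] fun x => w x * f x ^ 2 := by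
    filter_upwards [hw] with x hx
    simp [F, mul_pow, Real.sq_sqrt hx.le]
  have hG2 : (fun x => G x ^ 2) =ᵐ[μ] fun x => (w x)⁻¹ := by
    filter_upwards [hw] with x hx
    simp [G, inv_pow, Real.sq_sqrt hx.le]
  have hFG : (fun x => F x * G x) =ᵐ[μ] fun x => |f x| := by
    filter_upwards [hw] with x hx
    simp only [F, G]
    rw [mul_right_comm, mul_inv_cancel₀ (Real.sqrt_pos.2 hx).ne', one_mul]
  have hsqrt : AEStronglyMeasurable (fun x => √(w x)) μ :=
    Real.continuous_sqrt.comp_aestronglyMeasurable hwm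
  have hFm : AEStronglyMeasurable F μ :=
    hsqrt.mul (continuous_abs.comp_aestronglyMeasurable hf)
  have hGm : AEStronglyMeasurable G μ := hsqrt.aemeasurable.inv.aestronglyMeasurable
  have hF : MemLp F 2 μ := (memLp_two_iff_integrable_sq hFm).2 (hwf.congr hF2.symm)
  have hG : MemLp G 2 μ := (memLp_two_iff_integrable_sq hGm).2 (hw_inv.congr hG2.symm)
  refine ⟨(integrable_norm_iff hf).1 ((hF.integrable_mul hG).congr hFG), ?_⟩
  have holder := integral_mul_le_Lp_mul_Lq_of_nonneg (f := F) (g := G)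
    Real.HolderConjugate.two_two (ae_of_all _ fun x => by positivity)
    (ae_of_all _ fun x => by positivity) (by rwa [ENNReal.ofReal_ofNat])
    (by rwa [ENNReal.ofReal_ofNat])
  simp only [Real.rpow_two] at holder
  rwa [integral_congr_ae hFG, integral_congr_ae hF2, integral_congr_ae hG2,
    ← Real.sqrt_eq_rpow, ← Real.sqrt_eq_rpow] at holder

lemma rpow_neg_natCast_succ_eqOn_Ioi (j : ℕ) {c : ℝ} (hc : 0 ≤ c) :
    EqOn (fun x : ℝ => x ^ (-((j : ℝ) + 1))) (fun x => (x ^ (j + 1))⁻¹) (Ioi c) := fun x hx => by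
  simp only
  rw [Real.rpow_neg (hc.trans hx.le), ← Nat.cast_succ, Real.rpow_natCast]

theorem integrableOn_Ioi_inv_pow_succ {j : ℕ} (hj : 0 < j) {c : ℝ} (hc : 0 < c) :
    IntegrableOn (fun x : ℝ => (x ^ (j + 1))⁻¹) (Ioi c) :=
  (integrableOn_Ioi_rpow_of_lt (by simpa using hj) hc).congr_fun
    (rpow_neg_natCast_succ_eqOn_Ioi j hc.le) measurableSet_Ioi

theorem integral_Ioi_inv_pow_succ {j : ℕ} (hj : 0 < j) {c : ℝ} (hc : 0 < c) :
    ∫ x in Ioi c, (x ^ (j + 1))⁻¹ = (j * c ^ j)⁻¹ := by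
  rw [← setIntegral_congr_fun measurableSet_Ioi (rpow_neg_natCast_succ_eqOn_Ioi j hc.le),
    integral_Ioi_rpow_of_lt (by simpa using hj) hc, neg_add_rev, neg_add_cancel_comm,
    Real.rpow_neg hc.le, Real.rpow_natCast, neg_div_neg_eq, div_eq_inv_mul, mul_inv]

theorem abs_sub_le_integral_abs_of_hasDerivAt {f f' : ℝ → ℝ} {a b : ℝ}
    (hf : ∀ x ∈ uIcc a b, HasDerivAt f (f' x) x) (hf' : IntegrableOn f' (uIoc a b)) :
    |f b - f a| ≤ ∫ x in uIoc a b, |f' x| := by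
  rw [← intervalIntegral.integral_eq_sub_of_hasDerivAt hf (intervalIntegrable_iff.2 hf')]
  exact intervalIntegral.norm_integral_le_integral_norm_uIoc (f := f')

lemma rpow_natCast_add_two_div_two_sub_one {x : ℝ} (hx : 0 ≤ x) (j : ℕ) :
    x ^ (((j + 2 : ℕ) : ℝ) / 2 - 1) = √(x ^ j) := by
  rw [Real.sqrt_eq_rpow, ← Real.rpow_natCast, ← Real.rpow_mul hx]
  push_cast
  ring_nf

theorem sqrt_pow_mul_abs_le_of_le_three_mul {V V' : ℝ → ℝ} {j : ℕ} (hj : 0 < j) {α β : ℝ} (hα : 0 < α)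
    (hαβ : α ≤ 3 * β) (hV : ∀ x ∈ uIcc β α, HasDerivAt V (V' x) x)
    (hint : IntegrableOn (fun x => x ^ (j + 1) * V' x ^ 2) (uIoc β α)) :
    √(α ^ j) * |V α| ≤
      √(3 ^ j) * (√(∫ x in uIoc β α, x ^ (j + 1) * V' x ^ 2) + √(β ^ j) * |V β|) := by
  have hα3 : 0 < α / 3 := by positivity
  have hsub : uIoc β α ⊆ Ioi (α / 3) := fun x hx =>
    lt_of_le_of_lt (le_min (by linarith) (by linarith)) hx.1
  have hmeas : AEStronglyMeasurable V' (volume.restrict (uIoc β α)) :=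
    (measurable_deriv V).aestronglyMeasurable.congr <|
      ae_restrict_of_forall_mem measurableSet_uIoc fun x hx =>
        (hV x (uIoc_subset_uIcc hx)).deriv
  have hinv := integrableOn_Ioi_inv_pow_succ hj hα3
  obtain ⟨hV'int, hCS⟩ := integral_abs_le_sqrt_mul_sqrt (w := fun x => x ^ (j + 1))
    (ae_restrict_of_forall_mem measurableSet_uIoc fun x hx => pow_pos (hα3.trans (hsub hx)) _)
    hmeas (continuous_pow _).aestronglyMeasurable hint (hinv.mono_set hsub)
  set A := ∫ x in uIoc β α, x ^ (j + 1) * V' x ^ 2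
  set B := ∫ x in uIoc β α, (x ^ (j + 1))⁻¹
  have hB : B ≤ (j * (α / 3) ^ j)⁻¹ := by
    rw [← integral_Ioi_inv_pow_succ hj hα3]
    refine setIntegral_mono_set hinv ?_ hsub.eventuallyLE
    exact ae_restrict_of_forall_mem measurableSet_Ioi fun x hx =>
      inv_nonneg.2 (pow_nonneg (hα3.trans hx).le _)
  have hαB : α ^ j * B ≤ 3 ^ j := calc
    α ^ j * B ≤ α ^ j * (j * (α / 3) ^ j)⁻¹ := by gcongr
    _ = 3 ^ j / j := by field_simp; rw [← mul_pow, div_mul_cancel₀ α three_ne_zero]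
    _ ≤ 3 ^ j := div_le_self (by positivity) (by exact_mod_cast hj)
  have hαβj : α ^ j ≤ 3 ^ j * β ^ j := by
    rw [← mul_pow]; exact pow_le_pow_left₀ hα.le hαβ j
  have hVα : |V α| ≤ |V β| + √A * √B := by
    have := abs_sub_le_integral_abs_of_hasDerivAt hV hV'int
    linarith [abs_sub_abs_le_abs_sub (V α) (V β)]
  calc √(α ^ j) * |V α| ≤ √(α ^ j) * (|V β| + √A * √B) := by gcongr
    _ = √(α ^ j) * |V β| + √A * √(α ^ j * B) := by
      rw [Real.sqrt_mul (by positivity)]; ring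
    _ ≤ √(3 ^ j * β ^ j) * |V β| + √A * √(3 ^ j) := by gcongr
    _ = √(3 ^ j) * (√A + √(β ^ j) * |V β|) := by
      rw [Real.sqrt_mul (by positivity)]; ring

/-- For `n ≥ 3`, `I = Ioo a b ⊆ (0,∞)` bounded, `V ∈ H¹(I)` (absolutely continuous
representative with derivative `V'`), and points `α, β ∈ I` with `β ≥ α/3`:
`α^{n/2-1}|V(α)| ≤ C ((∫_I s^{n-1}|V'|²)^{1/2} + β^{n/2-1}|V(β)|)` with `C = C(n)`. -/
theorem stmt_1 (n : ℕ) (hn : 3 ≤ n) :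
    ∃ C > (0:ℝ), ∀ (a b : ℝ), 0 < a → a < b →
      ∀ V V' : ℝ → ℝ,
        (∀ x ∈ Icc a b, HasDerivAt V (V' x) x) →
        IntegrableOn (fun s => s ^ (n - 1 : ℕ) * (V' s) ^ 2) (Ioo a b) →
        ∀ α ∈ Ioo a b, ∀ β ∈ Ioo a b, α / 3 ≤ β →
          α ^ ((n : ℝ) / 2 - 1) * |V α| ≤
            C * ((∫ x in Ioo a b, x ^ (n - 1 : ℕ) * (V' x) ^ 2) ^ (1/2 : ℝ)
              + β ^ ((n : ℝ) / 2 - 1) * |V β|) := by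
  obtain ⟨j, rfl⟩ : ∃ j, n = j + 2 := ⟨n - 2, by omega⟩
  refine ⟨√(3 ^ j), by positivity, fun a b ha _ V V' hV hint α hα β hβ hαβ => ?_⟩
  have hα0 : 0 < α := ha.trans hα.1
  have hβ0 : 0 < β := ha.trans hβ.1
  have hIcc : uIcc β α ⊆ Icc a b := uIcc_subset_Icc ⟨hβ.1.le, hβ.2.le⟩ ⟨hα.1.le, hα.2.le⟩
  have hIoo : uIoc β α ⊆ Ioo a b := fun x hx =>
    ⟨(lt_min hβ.1 hα.1).trans hx.1, hx.2.trans_lt (max_lt hβ.2 hα.2)⟩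
  rw [Nat.add_succ_sub_one] at hint ⊢
  rw [rpow_natCast_add_two_div_two_sub_one hα0.le, rpow_natCast_add_two_div_two_sub_one hβ0.le,
    ← Real.sqrt_eq_rpow]
  refine (sqrt_pow_mul_abs_le_of_le_three_mul (by omega) hα0 (by linarith) (fun x hx => hV x (hIcc hx))
    (hint.mono_set hIoo)).trans ?_
  have hA : ∫ x in uIoc β α, x ^ (j + 1) * V' x ^ 2 ≤ ∫ x in Ioo a b, x ^ (j + 1) * V' x ^ 2 :=
    setIntegral_mono_set hint (ae_restrict_of_forall_mem measurableSet_Ioo fun x hx =>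
      mul_nonneg (pow_nonneg (ha.trans hx.1).le _) (sq_nonneg _)) hIoo.eventuallyLE
  gcongr
end

section
/- For all real numbers $u, w$ and real $p \ge 2$, $\left| \frac{|u+w|^{p+1} - |u|^{p+1}}{p+1} - |u|^{p-1} u\, w \right| \le C(p) (1 + |u|^{p-1}) (|w|^{p+1} + |w|^2)$ for some constant $C(p)$ depending only on $p$. -/
/-!
The left-hand side is the first-order Taylor remainder of `F y = |y|^{p+1}/(p+1)` at `u`, whose
derivative is the signed power `g y = |y|^{p-1} y`. Since `g' y = p |y|^{p-1}`, `g` is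
`p M^{p-1}`-Lipschitz on `[-M, M]`; the mean value theorem applied to `F y - g u * y` on the
segment from `u` to `u + w` (where `|y| ≤ M := |u| + |w|`) bounds the remainder by
`p (|u| + |w|)^{p-1} w²`, and `(|u| + |w|)^{p-1} ≤ 2^{p-1} (|u|^{p-1} + |w|^{p-1})` finishes.
-/

open Real Set Filter Topology

lemma add_rpow_le_two_rpow_mul_rpow_add_rpow {a b r : ℝ} (ha : 0 ≤ a) (hb : 0 ≤ b)
    (hr : 0 ≤ r) : (a + b) ^ r ≤ 2 ^ r * (a ^ r + b ^ r) := calc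
  (a + b) ^ r ≤ (2 * max a b) ^ r := by
    rw [two_mul]; gcongr <;> simp
  _ = 2 ^ r * (max a b) ^ r := mul_rpow zero_le_two (le_max_of_le_left ha)
  _ ≤ 2 ^ r * (a ^ r + b ^ r) := by
    gcongr
    rcases max_cases a b with ⟨h, -⟩ | ⟨h, -⟩ <;> rw [h] <;>
      linarith [rpow_nonneg ha r, rpow_nonneg hb r]

lemma hasDerivAt_abs_rpow_sub_one_mul_self {q : ℝ} (hq : 1 < q) (x : ℝ) :
    HasDerivAt (fun y => |y| ^ (q - 1) * y) (q * |x| ^ (q - 1)) x := by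
  rcases eq_or_ne x 0 with rfl | hx
  · have hslope : Tendsto (fun t : ℝ => |t| ^ (q - 1)) (𝓝[≠] 0) (𝓝 0) := by
      have := (continuous_abs.rpow_const fun _ => Or.inr (sub_nonneg.2 hq.le)).tendsto 0
      rw [abs_zero, zero_rpow (sub_pos.2 hq).ne'] at this
      exact this.mono_left nhdsWithin_le_nhds
    rw [hasDerivAt_iff_tendsto_slope_zero, abs_zero, zero_rpow (by linarith)]
    simp only [mul_zero]
    refine hslope.congr' ?_
    filter_upwards [self_mem_nhdsWithin] with t (ht : t ≠ 0)
    simp only [zero_add, sub_zero, smul_eq_mul]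
    field_simp
  · refine (((hasDerivAt_abs hx).rpow_const (Or.inl (abs_ne_zero.2 hx))).mul
      (hasDerivAt_id' x)).congr_deriv ?_
    have hpow : |x| ^ (q - 1 - 1) * |x| = |x| ^ (q - 1) := by
      rw [← rpow_add_one (abs_ne_zero.2 hx)]; ring_nf
    calc _ = (q - 1) * (|x| ^ (q - 1 - 1) * (SignType.sign x * x)) + |x| ^ (q - 1) := by ring
      _ = _ := by rw [sign_mul_self, hpow]; ring

lemma abs_abs_rpow_sub_one_mul_self_sub_le {q M a b : ℝ} (hq : 1 < q) (ha : |a| ≤ M)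
    (hb : |b| ≤ M) :
    |(|a| ^ (q - 1) * a - |b| ^ (q - 1) * b)| ≤ q * M ^ (q - 1) * |a - b| := by
  have hderiv_le : ∀ y ∈ Icc (-M) M, ‖q * |y| ^ (q - 1)‖ ≤ q * M ^ (q - 1) := fun y hy => by
    rw [norm_mul, norm_of_nonneg (by linarith), norm_of_nonneg (by positivity)]
    gcongr
    exact abs_le.2 hy
  simpa only [norm_eq_abs] using (convex_Icc (-M) M).norm_image_sub_le_of_norm_hasDerivWithin_le
    (fun y _ => (hasDerivAt_abs_rpow_sub_one_mul_self hq y).hasDerivWithinAt) hderiv_le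
    (abs_le.1 hb) (abs_le.1 ha)

lemma abs_abs_rpow_add_one_taylor_remainder_le {p : ℝ} (hp : 1 < p) (u w : ℝ) :
    |(|u + w| ^ (p + 1) - |u| ^ (p + 1)) / (p + 1) - |u| ^ (p - 1) * u * w| ≤
      p * (|u| + |w|) ^ (p - 1) * w ^ 2 := by
  set φ : ℝ → ℝ := fun y => |y| ^ (p + 1) / (p + 1) - |u| ^ (p - 1) * u * y
  have hφ : ∀ y, HasDerivAt φ (|y| ^ (p - 1) * y - |u| ^ (p - 1) * u) y := fun y => by
    refine (((hasDerivAt_abs_rpow y (by linarith)).div_const (p + 1)).sub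
      ((hasDerivAt_id' y).const_mul _)).congr_deriv ?_
    field_simp
    ring_nf
  have hφ_le : ∀ y ∈ uIcc u (u + w),
      ‖|y| ^ (p - 1) * y - |u| ^ (p - 1) * u‖ ≤ p * (|u| + |w|) ^ (p - 1) * |w| := fun y hy => by
    have hyu : |y - u| ≤ |w| := by simpa using abs_sub_left_of_mem_uIcc hy
    have hy : |y| ≤ |u| + |w| :=
      calc |y| = |u + (y - u)| := by ring_nf
        _ ≤ |u| + |w| := (abs_add_le _ _).trans (by linarith)
    calc _ ≤ p * (|u| + |w|) ^ (p - 1) * |y - u| :=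
          abs_abs_rpow_sub_one_mul_self_sub_le hp hy (le_add_of_nonneg_right (abs_nonneg w))
      _ ≤ _ := by gcongr
  have hmv := (convex_uIcc u (u + w)).norm_image_sub_le_of_norm_hasDerivWithin_le
    (fun y _ => (hφ y).hasDerivWithinAt) hφ_le left_mem_uIcc right_mem_uIcc
  simp only [φ, norm_eq_abs, add_sub_cancel_left] at hmv
  calc _ = _ := by ring_nf
    _ ≤ _ := hmv
    _ = _ := by rw [mul_assoc, ← sq, sq_abs]

/-- For all real `u, w` and `p ≥ 2`,
`|(|u+w|^{p+1} - |u|^{p+1})/(p+1) - |u|^{p-1} u w| ≤ C(p)(1+|u|^{p-1})(|w|^{p+1}+|w|²)`. -/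
theorem stmt_4 (p : ℝ) (hp : 2 ≤ p) :
    ∃ C > (0:ℝ), ∀ u w : ℝ,
      |(|u + w| ^ (p + 1) - |u| ^ (p + 1)) / (p + 1) - |u| ^ (p - 1) * u * w| ≤
        C * (1 + |u| ^ (p - 1)) * (|w| ^ (p + 1) + |w| ^ 2) := by
  refine ⟨p * 2 ^ (p - 1), by positivity, fun u w => ?_⟩
  have hw : |w| ^ (p - 1) * |w| ^ 2 = |w| ^ (p + 1) := by
    rw [← rpow_two, ← rpow_add' (abs_nonneg w) (by linarith)]; ring_nf
  have hu : 0 ≤ |u| ^ (p - 1) := by positivity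
  have hw' : 0 ≤ |w| ^ (p + 1) := by positivity
  calc _ ≤ p * (|u| + |w|) ^ (p - 1) * |w| ^ 2 := by
        rw [sq_abs]; exact abs_abs_rpow_add_one_taylor_remainder_le (by linarith) u w
    _ ≤ p * (2 ^ (p - 1) * (|u| ^ (p - 1) + |w| ^ (p - 1))) * |w| ^ 2 := by
        gcongr
        exact add_rpow_le_two_rpow_mul_rpow_add_rpow (abs_nonneg u) (abs_nonneg w) (by linarith)
    _ = p * 2 ^ (p - 1) * (|u| ^ (p - 1) * |w| ^ 2 + |w| ^ (p + 1)) := by rw [← hw]; ring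
    _ ≤ _ := by
        rw [mul_assoc (p * 2 ^ (p - 1))]
        gcongr
        nlinarith [mul_nonneg hu hw', sq_nonneg |w|]
end

section
/- The map $(t,r) \mapsto (T,\alpha)$ with $T = \arctan(t+r)+\arctan(t-r)$, $\alpha = \arctan(t+r)-\arctan(t-r)$ is a bijection from the quadrant $\{(t,r) : t \ge 0, r \ge 0\}$ onto the triangle $\{(T,\alpha) : T \ge 0,\ 0 \le \alpha < \pi - T\}$. -/
open Real

/-- The radial Penrose map `(t,r) ↦ (T,α)` with `T = arctan(t+r)+arctan(t-r)`,
`α = arctan(t+r)-arctan(t-r)` is a bijection from the quadrant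
`{t ≥ 0, r ≥ 0}` onto the triangle `{T ≥ 0, 0 ≤ α < π - T}`. -/
theorem stmt_11 :
    Set.BijOn
      (fun p : ℝ × ℝ =>
        (Real.arctan (p.1 + p.2) + Real.arctan (p.1 - p.2),
         Real.arctan (p.1 + p.2) - Real.arctan (p.1 - p.2)))
      {p : ℝ × ℝ | 0 ≤ p.1 ∧ 0 ≤ p.2}
      {q : ℝ × ℝ | 0 ≤ q.1 ∧ 0 ≤ q.2 ∧ q.2 < π - q.1} := by
  refine ⟨?_, ?_, ?_⟩
  · rintro ⟨t, r⟩ ⟨ht, hr⟩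
    have h1 : Real.arctan (-(t - r)) ≤ Real.arctan (t + r) :=
      Real.arctan_strictMono.monotone (by linarith)
    rw [Real.arctan_neg] at h1
    have h2 : Real.arctan (t - r) ≤ Real.arctan (t + r) :=
      Real.arctan_strictMono.monotone (by linarith)
    have h3 : Real.arctan (t + r) < π / 2 := Real.arctan_lt_pi_div_two _
    have h4 : -(π / 2) < Real.arctan (t - r) := Real.neg_pi_div_two_lt_arctan _
    refine ⟨show (0:ℝ) ≤ Real.arctan (t + r) + Real.arctan (t - r) by linarith,
      show (0:ℝ) ≤ Real.arctan (t + r) - Real.arctan (t - r) by linarith,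
      show Real.arctan (t + r) - Real.arctan (t - r) <
        π - (Real.arctan (t + r) + Real.arctan (t - r)) by linarith⟩
  · rintro ⟨t₁, r₁⟩ _ ⟨t₂, r₂⟩ _ h
    simp only [Prod.mk.injEq] at h
    obtain ⟨h1, h2⟩ := h
    have ha : Real.arctan (t₁ + r₁) = Real.arctan (t₂ + r₂) := by linarith
    have hb : Real.arctan (t₁ - r₁) = Real.arctan (t₂ - r₂) := by linarith
    have ha' := Real.arctan_injective ha
    have hb' := Real.arctan_injective hb
    have : t₁ = t₂ := by linarith
    have : r₁ = r₂ := by linarith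
    simp_all
  · rintro ⟨T, α⟩ ⟨hT, hα, hlt⟩
    set u : ℝ := (T + α) / 2 with hu_def
    set v : ℝ := (T - α) / 2 with hv_def
    have hpi : 0 < π := Real.pi_pos
    have hu1 : -(π / 2) < u := by simp only [hu_def]; linarith
    have hu2 : u < π / 2 := by simp only [hu_def]; linarith
    have hv1 : -(π / 2) < v := by simp only [hv_def]; linarith
    have hv2 : v < π / 2 := by simp only [hv_def]; linarith
    have hmu : u ∈ Set.Ioo (-(π / 2)) (π / 2) := ⟨hu1, hu2⟩
    have hmv : v ∈ Set.Ioo (-(π / 2)) (π / 2) := ⟨hv1, hv2⟩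
    have hmnu : -u ∈ Set.Ioo (-(π / 2)) (π / 2) := ⟨by linarith, by linarith⟩
    refine ⟨((Real.tan u + Real.tan v) / 2, (Real.tan u - Real.tan v) / 2), ⟨?_, ?_⟩, ?_⟩
    · -- tan v ≥ tan (-u)
      have hle : -u ≤ v := by simp only [hu_def, hv_def]; linarith
      have := Real.strictMonoOn_tan.monotoneOn hmnu hmv hle
      rw [Real.tan_neg] at this
      simp only [Set.mem_setOf_eq]
      linarith
    · have hle : v ≤ u := by simp only [hu_def, hv_def]; linarith
      have := Real.strictMonoOn_tan.monotoneOn hmv hmu hle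
      simp only [Set.mem_setOf_eq]
      linarith
    · have e1 : (Real.tan u + Real.tan v) / 2 + (Real.tan u - Real.tan v) / 2 = Real.tan u := by
        ring
      have e2 : (Real.tan u + Real.tan v) / 2 - (Real.tan u - Real.tan v) / 2 = Real.tan v := by
        ring
      simp only [e1, e2, Real.arctan_tan hu1 hu2, Real.arctan_tan hv1 hv2]
      simp only [hu_def, hv_def, Prod.mk.injEq]
      constructor <;> ring
end
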